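/- (Induction step of Theorem 1) Let f* be an optimal allocation over horizon T and let S₁, S₂ ∈ 𝒮 be distinct with f*(S₁) ≥ 1 and f*(S₂) ≥ 1. Define the allocation f' by f'(S₁) = 0, f'(S₂) = f*(S₁) + f*(S₂), and f'(S) = f*(S) for all other S ∈ 𝒮. Then J(f') = J(f*); in particular f' is also optimal and uses one fewer distinct super arm. -/

import Mathlib

/-!
Fix every super arm other than `S₁, S₂` as in `f*` and split the `t = f*(S₁) + f*(S₂)` pulls of
`S₁, S₂` as `t - x` and `x`. Because each `μ_i` is nondecreasing, the reward `G x` of this split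
has nondecreasing increments in `x`: arms only in `S₂` gain `μ_i` at growing arguments, arms only
in `S₁` lose `μ_i` at shrinking ones, and arms in both or neither are unaffected. Optimality of
`f*` at `x₀ = f*(S₂) ≥ 1` gives `G (x₀ - 1) ≤ G x₀`, so all increments from `x₀` on are
nonnegative and `G t ≥ G x₀`; optimality again gives equality.
-/

open Finset

/-- Number of pulls of base arm `i` under the allocation `f` over the super-arm set `𝒮`:
`N_i(f) = Σ_{S ∈ 𝒮, i ∈ S} f(S)`. -/
def pulls {K : ℕ} (𝒮 : Finset (Finset (Fin K))) (f : Finset (Fin K) → ℕ) (i : Fin K) : ℕ :=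
  ∑ S ∈ 𝒮.filter (fun S => i ∈ S), f S

/-- Expected cumulative reward of the allocation `f`:
`J(f) = Σ_{i=1}^K Σ_{n=1}^{N_i(f)} μ_i(n)`. -/
noncomputable def cumReward {K : ℕ} (μ : Fin K → ℕ → ℝ) (𝒮 : Finset (Finset (Fin K)))
    (f : Finset (Fin K) → ℕ) : ℝ :=
  ∑ i : Fin K, ∑ n ∈ Finset.Icc 1 (pulls 𝒮 f i), μ i n

lemma le_of_monotoneOn_fwdDiff {G : ℕ → ℝ} {x n : ℕ}
    (hG : MonotoneOn (fwdDiff 1 G) (Set.Iio n)) (hx : x < n) (hle : G x ≤ G (x + 1)) :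
    G (x + 1) ≤ G n := by
  have hx0 : 0 ≤ fwdDiff 1 G x := sub_nonneg.mpr hle
  induction n, hx using Nat.le_induction with
  | base => exact le_rfl
  | succ m hm ih =>
    have hstep : fwdDiff 1 G x ≤ fwdDiff 1 G m :=
      hG (by simp only [Set.mem_Iio]; omega) (by simp only [Set.mem_Iio]; omega) (by omega)
    have ih' := ih (hG.mono (Set.Iio_subset_Iio (by omega)))
    simp only [fwdDiff] at hstep hx0 ⊢
    linarith

/-- The pull count of a base arm along a split is `c + (t - x)`, `c + x` or constant, according to
whether it lies in `S₁` only, `S₂` only, or both or neither. -/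
lemma monotoneOn_fwdDiff_sum_Icc {u : ℕ → ℝ} (hu : Monotone u) (c t : ℕ) (p q : Prop)
    [Decidable p] [Decidable q] :
    MonotoneOn
      (fwdDiff 1 fun x => ∑ n ∈ Icc 1 (c + (if p then t - x else 0) + (if q then x else 0)), u n)
      (Set.Iio t) := by
  have succ_top : ∀ m, ∑ n ∈ Icc 1 (m + 1), u n = ∑ n ∈ Icc 1 m, u n + u (m + 1) :=
    fun m => sum_Icc_succ_top (by omega) u
  intro x hx y hy hxy
  simp only [Set.mem_Iio] at hx hy
  simp only [fwdDiff]
  by_cases hp : p <;> by_cases hq : q <;> simp only [hp, hq, if_true, if_false, add_zero]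
  · rw [show c + (t - (x + 1)) + (x + 1) = c + (t - x) + x by omega,
      show c + (t - (y + 1)) + (y + 1) = c + (t - y) + y by omega]
    simp
  · rw [show c + (t - x) = c + (t - (x + 1)) + 1 by omega,
      show c + (t - y) = c + (t - (y + 1)) + 1 by omega, succ_top, succ_top]
    have := hu (show c + (t - (y + 1)) + 1 ≤ c + (t - (x + 1)) + 1 by omega)
    linarith
  · rw [← add_assoc, ← add_assoc, succ_top, succ_top]
    have := hu (show c + x + 1 ≤ c + y + 1 by omega)
    linarith
  · simp

section SplitAlloc

variable {α : Type*} [DecidableEq α]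

def splitAlloc (g : α → ℕ) (a b : α) (t x : ℕ) : α → ℕ :=
  g + Pi.single a (t - x) + Pi.single b x

lemma sum_splitAlloc {s : Finset α} {a b : α} (ha : a ∈ s) (hb : b ∈ s) (g : α → ℕ) {t x : ℕ}
    (hx : x ≤ t) : ∑ S ∈ s, splitAlloc g a b t x S = ∑ S ∈ s, g S + t := by
  simp only [splitAlloc, Pi.add_apply, sum_add_distrib, sum_pi_single', ha, hb, if_true]
  omega

lemma splitAlloc_update_update {a b : α} (hab : a ≠ b) (f : α → ℕ) :
    splitAlloc (Function.update (Function.update f a 0) b 0) a b (f a + f b) (f b) = f := by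
  funext S
  by_cases ha : S = a
  · subst ha; simp [splitAlloc, hab]
  · by_cases hb : S = b
    · subst hb; simp [splitAlloc, Ne.symm hab]
    · simp [splitAlloc, ha, hb]

lemma splitAlloc_update_update_self {a b : α} (hab : a ≠ b) (f : α → ℕ) :
    splitAlloc (Function.update (Function.update f a 0) b 0) a b (f a + f b) (f a + f b) =
      fun S => if S = a then 0 else if S = b then f a + f b else f S := by
  funext S
  by_cases ha : S = a
  · subst ha; simp [splitAlloc, hab]
  · by_cases hb : S = b
    · subst hb; simp [splitAlloc, Ne.symm hab]
    · simp [splitAlloc, ha, hb]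

end SplitAlloc

section Reward

variable {K : ℕ} {𝒮 : Finset (Finset (Fin K))}

lemma pulls_add (f g : Finset (Fin K) → ℕ) (i : Fin K) :
    pulls 𝒮 (f + g) i = pulls 𝒮 f i + pulls 𝒮 g i :=
  sum_add_distrib

lemma pulls_single {S : Finset (Fin K)} (hS : S ∈ 𝒮) (k : ℕ) (i : Fin K) :
    pulls 𝒮 (Pi.single S k) i = if i ∈ S then k else 0 := by
  simp [pulls, sum_pi_single', hS]

lemma monotoneOn_fwdDiff_cumReward_splitAlloc {μ : Fin K → ℕ → ℝ} (hμ : ∀ i, Monotone (μ i))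
    {S₁ S₂ : Finset (Fin K)} (hS₁ : S₁ ∈ 𝒮) (hS₂ : S₂ ∈ 𝒮) (g : Finset (Fin K) → ℕ) (t : ℕ) :
    MonotoneOn (fwdDiff 1 fun x => cumReward μ 𝒮 (splitAlloc g S₁ S₂ t x)) (Set.Iio t) := by
  have hpulls : ∀ x i, pulls 𝒮 (splitAlloc g S₁ S₂ t x) i =
      pulls 𝒮 g i + (if i ∈ S₁ then t - x else 0) + (if i ∈ S₂ then x else 0) := by
    intro x i
    rw [splitAlloc, pulls_add, pulls_add, pulls_single hS₁, pulls_single hS₂]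
  intro x hx y hy hxy
  simp only [fwdDiff, cumReward, hpulls, ← sum_sub_distrib]
  exact sum_le_sum fun i _ =>
    monotoneOn_fwdDiff_sum_Icc (hμ i) (pulls 𝒮 g i) t (i ∈ S₁) (i ∈ S₂) hx hy hxy

end Reward

theorem induction_step_merge_super_arms_general
    (K : ℕ) (μ : Fin K → ℕ → ℝ) (𝒮 : Finset (Finset (Fin K))) (T : ℕ)
    (hmono : ∀ i, Monotone (μ i))
    (fstar : Finset (Fin K) → ℕ)
    (hsum : (∑ S ∈ 𝒮, fstar S) = T)
    (hopt : ∀ f : Finset (Fin K) → ℕ, (∑ S ∈ 𝒮, f S) = T →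
      cumReward μ 𝒮 f ≤ cumReward μ 𝒮 fstar)
    (S₁ S₂ : Finset (Fin K)) (hS₁ : S₁ ∈ 𝒮) (hS₂ : S₂ ∈ 𝒮)
    (hne : S₁ ≠ S₂) (hpos₂ : 1 ≤ fstar S₂) :
    cumReward μ 𝒮
        (fun S => if S = S₁ then 0 else if S = S₂ then fstar S₁ + fstar S₂ else fstar S) =
      cumReward μ 𝒮 fstar ∧
    ∀ f : Finset (Fin K) → ℕ, (∑ S ∈ 𝒮, f S) = T →
      cumReward μ 𝒮 f ≤ cumReward μ 𝒮
        (fun S => if S = S₁ then 0 else if S = S₂ then fstar S₁ + fstar S₂ else fstar S) := by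
  set g := Function.update (Function.update fstar S₁ 0) S₂ 0
  set t := fstar S₁ + fstar S₂
  set G : ℕ → ℝ := fun x => cumReward μ 𝒮 (splitAlloc g S₁ S₂ t x)
  have hfstar : splitAlloc g S₁ S₂ t (fstar S₂) = fstar := splitAlloc_update_update hne fstar
  have hG_le : ∀ x ≤ t, G x ≤ cumReward μ 𝒮 fstar := fun x hx => hopt _ <| by
    rw [sum_splitAlloc hS₁ hS₂ g hx, ← sum_splitAlloc hS₁ hS₂ g (x := fstar S₂) (by omega),
      hfstar, hsum]
  obtain ⟨x₀, hx₀⟩ : ∃ x₀, fstar S₂ = x₀ + 1 := ⟨fstar S₂ - 1, by omega⟩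
  have hGt : G t = cumReward μ 𝒮 fstar := by
    refine le_antisymm (hG_le t le_rfl) ?_
    have hGx₀ : G (x₀ + 1) = cumReward μ 𝒮 fstar := by simp only [G, ← hx₀, hfstar]
    rw [← hGx₀]
    exact le_of_monotoneOn_fwdDiff (monotoneOn_fwdDiff_cumReward_splitAlloc hmono hS₁ hS₂ g t)
      (by omega) (hGx₀ ▸ hG_le x₀ (by omega))
  rw [← splitAlloc_update_update_self hne fstar]
  exact ⟨hGt, fun f hf => (hopt f hf).trans_eq hGt.symm⟩

/-- (Induction step of Theorem 1) If `fstar` is an optimal allocation that pulls the distinct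
super arms `S₁` and `S₂` at least once each, then reallocating all pulls of `S₁` to `S₂`
yields the same expected cumulative reward; in particular the new allocation is also optimal. -/
theorem induction_step_merge_super_arms
    (K : ℕ) (μ : Fin K → ℕ → ℝ) (𝒮 : Finset (Finset (Fin K))) (T : ℕ)
    (h𝒮 : 𝒮.Nonempty)
    (h0 : ∀ i n, 0 ≤ μ i n) (h1 : ∀ i n, μ i n ≤ 1)
    (hmono : ∀ i, Monotone (μ i))
    (hconc : ∀ i n, μ i (n + 2) - μ i (n + 1) ≤ μ i (n + 1) - μ i n)
    (fstar : Finset (Fin K) → ℕ)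
    (hsum : (∑ S ∈ 𝒮, fstar S) = T)
    (hopt : ∀ f : Finset (Fin K) → ℕ, (∑ S ∈ 𝒮, f S) = T →
      cumReward μ 𝒮 f ≤ cumReward μ 𝒮 fstar)
    (S₁ S₂ : Finset (Fin K)) (hS₁ : S₁ ∈ 𝒮) (hS₂ : S₂ ∈ 𝒮)
    (hne : S₁ ≠ S₂) (hpos₁ : 1 ≤ fstar S₁) (hpos₂ : 1 ≤ fstar S₂) :
    cumReward μ 𝒮
        (fun S => if S = S₁ then 0 else if S = S₂ then fstar S₁ + fstar S₂ else fstar S) =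
      cumReward μ 𝒮 fstar ∧
    ∀ f : Finset (Fin K) → ℕ, (∑ S ∈ 𝒮, f S) = T →
      cumReward μ 𝒮 f ≤ cumReward μ 𝒮
        (fun S => if S = S₁ then 0 else if S = S₂ then fstar S₁ + fstar S₂ else fstar S) :=
  induction_step_merge_super_arms_general K μ 𝒮 T hmono fstar hsum hopt S₁ S₂ hS₁ hS₂ hne hpos₂
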